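/- Let K : ℝ^d → ℝ be bounded and Lipschitz with K(0) fixed, and let u be Schwartz with ‖u‖_{L²} = 1, and χ smooth ℤ^d-periodic with unit-cell L² norm 1. Then for every z, y ∈ ℝ^d, ∫ K(√ε ζ) |u(z - ζ)|² |χ(y - ζ/√ε)|² dζ → K(0) ∫ |u(z - ζ)|² dζ = K(0) as ε → 0⁺. -/

import Mathlib

open Pointwise
open MeasureTheory Filter Set

lemma cell_shift {d : ℕ} (φ : (Fin d → ℝ) → ℝ) (hφm : Measurable φ)
    (hper : ∀ (x : Fin d → ℝ) (γ : Fin d → ℤ), φ (x + fun i => (γ i : ℝ)) = φ x)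
    (c : Fin d → ℝ) :
    ∫ w in Set.univ.pi fun _ : Fin d => Set.Ico (0:ℝ) 1, φ (w - c) =
    ∫ w in Set.univ.pi fun _ : Fin d => Set.Ico (0:ℝ) 1, φ w := by
  classical
  set cell : Set (Fin d → ℝ) := Set.univ.pi fun _ : Fin d => Set.Ico (0:ℝ) 1 with hcelldef
  set b := Pi.basisFun ℝ (Fin d)
  have hcell : IsAddFundamentalDomain (↥(Submodule.span ℤ (Set.range ⇑b)))
      cell volume := by
    rw [hcelldef, ← ZSpan.fundamentalDomain_pi_basisFun]
    exact ZSpan.isAddFundamentalDomain b volume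
  have hinv : ∀ (γ : ↥(Submodule.span ℤ (Set.range ⇑b))) (x : Fin d → ℝ),
      φ (γ +ᵥ x) = φ x := by
    intro γ x
    have h1 : ∀ i, ∃ n : ℤ, (n : ℝ) = (γ : Fin d → ℝ) i := by
      intro i
      have := ((Pi.basisFun ℝ (Fin d)).mem_span_iff_repr_mem ℤ (γ : Fin d → ℝ)).mp γ.2 i
      simpa using this
    choose n hn using h1
    have : (γ : Fin d → ℝ) = fun i => (n i : ℝ) := by
      funext i; exact (hn i).symm
    have hvadd : γ +ᵥ x = x + fun i => (n i : ℝ) := by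
      show (γ : Fin d → ℝ) + x = _
      rw [this, add_comm]
    rw [hvadd]
    exact hper x n
  haveI : VAddCommClass (Fin d → ℝ) (↥(Submodule.span ℤ (Set.range ⇑b))) (Fin d → ℝ) :=
    ⟨fun a γ x => by show a + ((γ : Fin d → ℝ) + x) = (γ : Fin d → ℝ) + (a + x); ring⟩
  haveI : VAddInvariantMeasure (↥(Submodule.span ℤ (Set.range ⇑b))) (Fin d → ℝ) volume :=
    ⟨fun γ s _ => by
      show volume ((fun x : Fin d → ℝ => (γ : Fin d → ℝ) + x) ⁻¹' s) = volume s
      exact measure_preimage_add volume _ s⟩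
  haveI : MeasurableVAdd (↥(Submodule.span ℤ (Set.range ⇑b))) (Fin d → ℝ) :=
    { measurable_const_vadd := fun γ => by
        show Measurable fun x : Fin d → ℝ => (γ : Fin d → ℝ) + x
        exact measurable_const_add _,
      measurable_vadd_const := fun x => by
        show Measurable fun γ : ↥(Submodule.span ℤ (Set.range ⇑b)) => (γ : Fin d → ℝ) + x
        exact (measurable_subtype_coe.add_const _) }
  have htrans : IsAddFundamentalDomain (↥(Submodule.span ℤ (Set.range ⇑b)))
      ((-c) +ᵥ cell) volume := hcell.vadd_of_comm (-c)
  have hchg : ∫ w in cell, φ (w - c) = ∫ x in (-c) +ᵥ cell, φ x := by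
    have hmp : MeasurePreserving (fun w : Fin d → ℝ => w - c) volume volume :=
      measurePreserving_sub_right volume c
    have hemb : MeasurableEmbedding (fun w : Fin d → ℝ => w - c) :=
      (MeasurableEquiv.subRight c).measurableEmbedding
    have hpre : cell = (fun w : Fin d → ℝ => w - c) ⁻¹' ((-c) +ᵥ cell) := by
      ext x
      simp only [Set.mem_preimage, Set.mem_vadd_set, sub_eq_neg_add]
      constructor
      · intro h
        refine ⟨x, h, ?_⟩
        rfl
      · rintro ⟨y, hy, hxy⟩
        have : x = y := by
          have := congrArg (fun t => c + t) hxy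
          simpa [← add_assoc] using this.symm
        rwa [this]
    have := hmp.setIntegral_preimage_emb hemb φ ((-c) +ᵥ cell)
    rw [← hpre] at this
    exact this
  rw [hchg]
  exact htrans.setIntegral_eq hcell hinv

set_option maxHeartbeats 2000000 in
/-- Smooth-kernel limit (Section 4.2): for bounded Lipschitz `K`, Schwartz `u` with
`‖u‖_{L²} = 1` and smooth periodic normalized `χ`,
`∫ K(√ε ζ)|u(z-ζ)|²|χ(y-ζ/√ε)|² dζ → K(0)` as `ε → 0⁺`. -/
theorem smooth_kernel_limit
    (d : ℕ) (K : (Fin d → ℝ) → ℝ) (B : ℝ) (hKb : ∀ x, |K x| ≤ B)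
    (L : NNReal) (hKlip : LipschitzWith L K)
    (u : SchwartzMap (Fin d → ℝ) ℂ) (hu2 : ∫ ζ : Fin d → ℝ, ‖u ζ‖ ^ 2 = 1)
    (χ : (Fin d → ℝ) → ℂ) (hχsmooth : ContDiff ℝ (⊤ : ℕ∞) χ)
    (hχper : ∀ (y : Fin d → ℝ) (γ : Fin d → ℤ), χ (y + fun i => (γ i : ℝ)) = χ y)
    (hχnorm : ∫ y in Set.univ.pi fun _ : Fin d => Set.Ico (0 : ℝ) 1, ‖χ y‖ ^ 2 = 1)
    (z y : Fin d → ℝ) :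
    Tendsto
        (fun ε : ℝ =>
          ∫ ζ : Fin d → ℝ,
            K (Real.sqrt ε • ζ) * ‖u (z - ζ)‖ ^ 2 *
              ‖χ (y - (Real.sqrt ε)⁻¹ • ζ)‖ ^ 2)
        (nhdsWithin 0 (Set.Ioi 0))
        (nhds (K 0 * ∫ ζ : Fin d → ℝ, ‖u (z - ζ)‖ ^ 2)) ∧
      K 0 * (∫ ζ : Fin d → ℝ, ‖u (z - ζ)‖ ^ 2) = K 0 := by
  classical
  set cell : Set (Fin d → ℝ) := Set.univ.pi fun _ : Fin d => Set.Ico (0:ℝ) 1 with hcell_def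
  set φ : (Fin d → ℝ) → ℝ := fun x => ‖χ x‖ ^ 2 with hφ_def
  set g : (Fin d → ℝ) → ℝ := fun ζ => ‖u (z - ζ)‖ ^ 2 with hg_def
  -- basic facts about φ
  have hφcont : Continuous φ := by
    exact (hχsmooth.continuous.norm).pow 2
  have hφnn : ∀ x, 0 ≤ φ x := fun x => by simp only [hφ_def]; positivity
  have hφper2 : ∀ (x : Fin d → ℝ) (γ : Fin d → ℤ), φ (x + fun i => (γ i : ℝ)) = φ x := by
    intro x γ; simp only [hφ_def, hχper x γ]
  have hM : ∃ M : ℝ, 0 ≤ M ∧ ∀ x, φ x ≤ M := by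
    obtain ⟨M0, hM0⟩ := (isCompact_univ_pi fun _ : Fin d =>
      isCompact_Icc (a := (0:ℝ)) (b := 1)).exists_bound_of_continuousOn hφcont.continuousOn
    refine ⟨max M0 0, le_max_right _ _, fun x => ?_⟩
    have hmem : (x - fun i => ((⌊x i⌋ : ℤ) : ℝ)) ∈
        Set.univ.pi fun _ : Fin d => Set.Icc (0:ℝ) 1 := by
      intro i _
      have h1 := Int.floor_le (x i)
      have h2 := Int.lt_floor_add_one (x i)
      constructor
      · simp only [Pi.sub_apply]; linarith
      · simp only [Pi.sub_apply]; linarith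
    have heq : φ x = φ (x - fun i => ((⌊x i⌋ : ℤ) : ℝ)) := by
      have := hφper2 (x - fun i => ((⌊x i⌋ : ℤ) : ℝ)) (fun i => ⌊x i⌋)
      rw [← this]
      congr 1
      funext i
      simp
    rw [heq]
    refine le_trans (le_trans (le_abs_self _) ?_) (le_max_left _ _)
    simpa [Real.norm_eq_abs] using hM0 _ hmem
  obtain ⟨M, hMnn, hMb⟩ := hM
  have hcellmeas : MeasurableSet cell :=
    MeasurableSet.univ_pi fun _ => measurableSet_Ico
  have hvol : volume cell = 1 := by
    rw [hcell_def, volume_pi_pi]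
    simp [Real.volume_Ico]
  haveI hfin : IsFiniteMeasure (volume.restrict cell) := by
    constructor; rw [Measure.restrict_apply_univ, hvol]; exact ENNReal.one_lt_top
  have hcellφ : ∫ w in cell, φ w = 1 := by
    simpa [hφ_def] using hχnorm
  have hshift : ∀ c, ∫ w in cell, φ (w - c) = 1 := by
    intro c
    rw [hcell_def] at hcellφ ⊢
    rw [cell_shift φ hφcont.measurable hφper2 c]
    exact hcellφ
  -- basic facts about g
  have hgc : Continuous g := by simp only [hg_def]; fun_prop
  have hgnn : ∀ x, 0 ≤ g x := fun x => by simp only [hg_def]; positivity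
  obtain ⟨C0, hC0pos, hC0⟩ := u.decay 0 0
  have hC0nn : 0 ≤ C0 := hC0pos.le
  have hubd : ∀ x, ‖u x‖ ≤ C0 := by
    intro x
    have := hC0 x
    simpa [norm_iteratedFDeriv_zero] using this
  have hut : Integrable (fun ζ : Fin d → ℝ => ‖u (z - ζ)‖) := by
    have : Integrable (fun ζ : Fin d → ℝ => u (z - ζ)) := by
      exact (integrable_comp_sub_left (fun ζ => u ζ) z).mpr u.integrable
    exact this.norm
  have hgi : Integrable g := by
    refine (hut.const_mul C0).mono' (hgc.aestronglyMeasurable) ?_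
    filter_upwards with ζ
    rw [Real.norm_of_nonneg (hgnn ζ)]
    simp only [hg_def, pow_two]
    exact mul_le_mul_of_nonneg_right (hubd _) (norm_nonneg _)
  obtain ⟨Ca, hCapos, hCa0⟩ := u.decay 1 0
  have hCa : ∀ x, ‖x‖ * ‖u x‖ ≤ Ca := by
    intro x
    simpa [norm_iteratedFDeriv_zero] using hCa0 x
  have hgi1 : Integrable (fun ζ => ‖ζ‖ * g ζ) := by
    refine (hut.const_mul (Ca + ‖z‖ * C0)).mono'
      ((continuous_norm.mul hgc).aestronglyMeasurable) ?_
    filter_upwards with ζ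
    rw [Real.norm_of_nonneg (mul_nonneg (norm_nonneg _) (hgnn ζ))]
    have h1 : ‖ζ‖ ≤ ‖z - ζ‖ + ‖z‖ := by
      have : ‖(z - ζ) - z‖ ≤ ‖z - ζ‖ + ‖z‖ := norm_sub_le _ _
      simpa using this
    have hn : (0:ℝ) ≤ ‖u (z - ζ)‖ := norm_nonneg _
    calc ‖ζ‖ * g ζ = ‖ζ‖ * (‖u (z - ζ)‖ * ‖u (z - ζ)‖) := by rw [hg_def]; ring
      _ ≤ (‖z - ζ‖ + ‖z‖) * (‖u (z - ζ)‖ * ‖u (z - ζ)‖) := by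
          apply mul_le_mul_of_nonneg_right h1 (by positivity)
      _ = (‖z - ζ‖ * ‖u (z - ζ)‖) * ‖u (z - ζ)‖ + ‖z‖ * (‖u (z - ζ)‖ * ‖u (z - ζ)‖) := by ring
      _ ≤ Ca * ‖u (z - ζ)‖ + ‖z‖ * (C0 * ‖u (z - ζ)‖) := by
          gcongr
          · exact hCa _
          · exact hubd _
      _ = (Ca + ‖z‖ * C0) * ‖u (z - ζ)‖ := by ring
  have hgone : ∫ ζ, g ζ = 1 := by
    simp only [hg_def]
    rw [integral_sub_left_eq_self (fun ζ => ‖u ζ‖ ^ 2) volume z]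
    exact hu2
  -- majorant
  obtain ⟨D, hDi, hDnn, hDbd⟩ :
      ∃ D : (Fin d → ℝ) → ℝ, Integrable D ∧ (∀ ξ, 0 ≤ D ξ) ∧
        ∀ ξ h : Fin d → ℝ, ‖h‖ ≤ 1 → g (ξ + h) ≤ D ξ := by
    obtain ⟨Cb, hCbpos, hCb0⟩ := u.decay (d + 1) 0
    have hCb : ∀ x, ‖x‖ ^ (d+1) * ‖u x‖ ≤ Cb := by
      intro x
      simpa [norm_iteratedFDeriv_zero] using hCb0 x
    have h1 : ∀ x : Fin d → ℝ, (1 + ‖x‖) ^ (d+1) * ‖u x‖ ≤ 2 ^ (d+1) * (C0 + Cb) := by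
      intro x
      rcases le_total ‖x‖ 1 with hx | hx
      · have hp : (1 + ‖x‖) ^ (d+1) ≤ 2 ^ (d+1) :=
          pow_le_pow_left₀ (by positivity) (by linarith) _
        calc (1 + ‖x‖) ^ (d+1) * ‖u x‖ ≤ 2 ^ (d+1) * C0 := by
              exact mul_le_mul hp (hubd x) (norm_nonneg _) (by positivity)
          _ ≤ 2 ^ (d+1) * (C0 + Cb) := by
              have : (0:ℝ) ≤ Cb := hCbpos.le
              nlinarith [pow_pos (two_pos (α := ℝ)) (d+1)]
      · have hp : (1 + ‖x‖) ^ (d+1) ≤ 2 ^ (d+1) * ‖x‖ ^ (d+1) := by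
          rw [← mul_pow]
          exact pow_le_pow_left₀ (by positivity) (by linarith) _
        calc (1 + ‖x‖) ^ (d+1) * ‖u x‖ ≤ (2 ^ (d+1) * ‖x‖ ^ (d+1)) * ‖u x‖ :=
              mul_le_mul_of_nonneg_right hp (norm_nonneg _)
          _ = 2 ^ (d+1) * (‖x‖ ^ (d+1) * ‖u x‖) := by ring
          _ ≤ 2 ^ (d+1) * Cb := by
              exact mul_le_mul_of_nonneg_left (hCb x) (by positivity)
          _ ≤ 2 ^ (d+1) * (C0 + Cb) := by
              have : (0:ℝ) ≤ C0 := hC0nn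
              nlinarith [pow_pos (two_pos (α := ℝ)) (d+1)]
    have hpt : ∀ x : Fin d → ℝ, (1 + ‖x‖) ^ (d+1) * ‖u x‖ ^ 2 ≤
        (2 ^ (d+1) * (C0 + Cb)) * C0 := by
      intro x
      calc (1 + ‖x‖) ^ (d+1) * ‖u x‖ ^ 2
          = ((1 + ‖x‖) ^ (d+1) * ‖u x‖) * ‖u x‖ := by ring
        _ ≤ (2 ^ (d+1) * (C0 + Cb)) * C0 :=
            mul_le_mul (h1 x) (hubd x) (norm_nonneg _)
              (by positivity)
    have hC2nn : (0:ℝ) ≤ 2 ^ (d+1) * (C0 + Cb) * C0 := by positivity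
    refine ⟨fun ξ => ((2 + ‖z‖) ^ (d+1) * (2 ^ (d+1) * (C0 + Cb) * C0)) *
        ((1 + ‖ξ‖) ^ (d+1))⁻¹, ?_, ?_, ?_⟩
    · have hfr : ((Module.finrank ℝ (Fin d → ℝ) : ℝ)) < ((d:ℝ) + 1) := by
        rw [Module.finrank_fintype_fun_eq_card]
        simp
      have hint := integrable_one_add_norm (E := Fin d → ℝ) (μ := volume) hfr
      have hint2 : Integrable (fun ξ : Fin d → ℝ => ((1 + ‖ξ‖) ^ (d+1))⁻¹) := by
        refine hint.congr (Eventually.of_forall fun ξ => ?_)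
        show (1 + ‖ξ‖) ^ (-((d:ℝ) + 1)) = ((1 + ‖ξ‖) ^ (d+1))⁻¹
        rw [Real.rpow_neg (by positivity)]
        congr 1
        rw [show ((d:ℝ) + 1) = ((d+1 : ℕ) : ℝ) by push_cast; ring, Real.rpow_natCast]
      exact hint2.const_mul _
    · intro ξ
      positivity
    · intro ξ h hh
      have hx : z - (ξ + h) = z - ξ - h := by abel
      have hkey : (1 + ‖ξ‖) ≤ (2 + ‖z‖) * (1 + ‖z - (ξ + h)‖) := by
        have h2 : ‖ξ‖ ≤ ‖z‖ + ‖z - (ξ + h)‖ + ‖h‖ := by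
          have hxi : ‖ξ‖ = ‖z - (z - (ξ + h)) - h‖ := by congr 1; abel
          rw [hxi]
          calc ‖z - (z - (ξ + h)) - h‖ ≤ ‖z - (z - (ξ + h))‖ + ‖h‖ := norm_sub_le _ _
            _ ≤ ‖z‖ + ‖z - (ξ + h)‖ + ‖h‖ := by
                have := norm_sub_le z (z - (ξ + h))
                linarith
        nlinarith [norm_nonneg (z - (ξ + h)), norm_nonneg z, norm_nonneg ξ]
      have hkeyp : (1 + ‖ξ‖) ^ (d+1) ≤ (2 + ‖z‖) ^ (d+1) * (1 + ‖z - (ξ + h)‖) ^ (d+1) := by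
        rw [← mul_pow]
        exact pow_le_pow_left₀ (by positivity) hkey _
      have hppos : (0:ℝ) < (1 + ‖ξ‖) ^ (d+1) := by positivity
      have hgoal : g (ξ + h) * (1 + ‖ξ‖) ^ (d+1) ≤
          (2 + ‖z‖) ^ (d+1) * (2 ^ (d+1) * (C0 + Cb) * C0) := by
        have hpt2 := hpt (z - (ξ + h))
        have hgval : g (ξ + h) = ‖u (z - (ξ + h))‖ ^ 2 := by rw [hg_def]
        calc g (ξ + h) * (1 + ‖ξ‖) ^ (d+1)
            ≤ g (ξ + h) * ((2 + ‖z‖) ^ (d+1) * (1 + ‖z - (ξ + h)‖) ^ (d+1)) :=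
              mul_le_mul_of_nonneg_left hkeyp (hgnn _)
          _ = (2 + ‖z‖) ^ (d+1) * ((1 + ‖z - (ξ + h)‖) ^ (d+1) * ‖u (z - (ξ + h))‖ ^ 2) := by
              rw [hgval]; ring
          _ ≤ (2 + ‖z‖) ^ (d+1) * (2 ^ (d+1) * (C0 + Cb) * C0) := by
              refine mul_le_mul_of_nonneg_left ?_ (by positivity)
              simpa [mul_assoc] using hpt2
      show g (ξ + h) ≤ ((2 + ‖z‖) ^ (d+1) * (2 ^ (d+1) * (C0 + Cb) * C0)) *
          ((1 + ‖ξ‖) ^ (d+1))⁻¹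
      calc g (ξ + h) = g (ξ + h) * (1 + ‖ξ‖) ^ (d+1) * ((1 + ‖ξ‖) ^ (d+1))⁻¹ := by
            field_simp
        _ ≤ ((2 + ‖z‖) ^ (d+1) * (2 ^ (d+1) * (C0 + Cb) * C0)) * ((1 + ‖ξ‖) ^ (d+1))⁻¹ :=
            mul_le_mul_of_nonneg_right hgoal (by positivity)
  refine ⟨?_, by rw [hgone, mul_one]⟩
  -- main convergence
  set C1 : ℝ := ∫ ζ, ‖ζ‖ * g ζ with hC1_def
  set R : ℝ → ℝ := fun ε => ∫ p : (Fin d → ℝ) × (Fin d → ℝ),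
      |g p.2 - g (p.2 + Real.sqrt ε • (p.1 - y))| ∂((volume.restrict cell).prod volume) with hR_def
  set ε₀ : ℝ := (2 + ‖y‖)⁻¹ ^ 2 with hε₀_def
  have hynn : (0:ℝ) < 2 + ‖y‖ := by positivity
  have hε₀pos : 0 < ε₀ := by positivity
  have hwcell : ∀ w ∈ cell, ‖w‖ ≤ 1 := by
    intro w hw
    rw [pi_norm_le_iff_of_nonneg zero_le_one]
    intro i
    have := hw i (Set.mem_univ i)
    rw [Real.norm_eq_abs, abs_le]
    exact ⟨by linarith [this.1], by linarith [this.2]⟩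
  have hsmall : ∀ ε ∈ Set.Ioo (0:ℝ) ε₀, ∀ w ∈ cell, ‖Real.sqrt ε • (w - y)‖ ≤ 1 := by
    intro ε hε w hw
    rw [norm_smul, Real.norm_eq_abs, abs_of_nonneg (Real.sqrt_nonneg _)]
    have h1 : Real.sqrt ε ≤ (2 + ‖y‖)⁻¹ := by
      have := Real.sqrt_le_sqrt hε.2.le
      rwa [hε₀_def, Real.sqrt_sq (by positivity)] at this
    have h2 : ‖w - y‖ ≤ 2 + ‖y‖ := by
      calc ‖w - y‖ ≤ ‖w‖ + ‖y‖ := norm_sub_le _ _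
        _ ≤ 2 + ‖y‖ := by linarith [hwcell w hw]
    calc Real.sqrt ε * ‖w - y‖ ≤ (2 + ‖y‖)⁻¹ * (2 + ‖y‖) :=
          mul_le_mul h1 h2 (norm_nonneg _) (by positivity)
      _ = 1 := by field_simp
  have hae : ∀ᵐ p : (Fin d → ℝ) × (Fin d → ℝ) ∂((volume.restrict cell).prod volume),
      p.1 ∈ cell := by
    rw [ae_iff]
    have hset : {p : (Fin d → ℝ) × (Fin d → ℝ) | ¬ p.1 ∈ cell} = cellᶜ ×ˢ Set.univ := by
      ext p; simp
    rw [hset, Measure.prod_prod, Measure.restrict_apply hcellmeas.compl]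
    simp
  have hbint : Integrable (fun p : (Fin d → ℝ) × (Fin d → ℝ) => g p.2 + D p.2)
      ((volume.restrict cell).prod volume) := by
    have h := (integrable_const (1:ℝ) (μ := volume.restrict cell)).mul_prod (hgi.add hDi)
    simpa using h
  have hFcont : ∀ ε : ℝ, Continuous fun p : (Fin d → ℝ) × (Fin d → ℝ) =>
      |g p.2 - g (p.2 + Real.sqrt ε • (p.1 - y))| := by
    intro ε
    apply Continuous.abs
    exact (hgc.comp continuous_snd).sub
      (hgc.comp (by fun_prop))
  have hFbd : ∀ ε ∈ Set.Ioo (0:ℝ) ε₀,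
      ∀ᵐ p : (Fin d → ℝ) × (Fin d → ℝ) ∂((volume.restrict cell).prod volume),
        ‖|g p.2 - g (p.2 + Real.sqrt ε • (p.1 - y))|‖ ≤ g p.2 + D p.2 := by
    intro ε hε
    filter_upwards [hae] with p hp
    rw [Real.norm_eq_abs, abs_abs]
    have h1 : |g p.2 - g (p.2 + Real.sqrt ε • (p.1 - y))| ≤
        |g p.2| + |g (p.2 + Real.sqrt ε • (p.1 - y))| := abs_sub _ _
    have h2 : g (p.2 + Real.sqrt ε • (p.1 - y)) ≤ D p.2 :=
      hDbd p.2 _ (hsmall ε hε p.1 hp)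
    rw [abs_of_nonneg (hgnn _), abs_of_nonneg (hgnn _)] at h1
    linarith
  have claim3 : Tendsto R (nhdsWithin 0 (Set.Ioi 0)) (nhds 0) := by
    have hdct := tendsto_integral_filter_of_dominated_convergence
      (μ := (volume.restrict cell).prod volume)
      (F := fun (ε : ℝ) (p : (Fin d → ℝ) × (Fin d → ℝ)) =>
        |g p.2 - g (p.2 + Real.sqrt ε • (p.1 - y))|)
      (f := fun _ => (0:ℝ)) (l := nhdsWithin 0 (Set.Ioi 0))
      (fun p => g p.2 + D p.2)
      (Eventually.of_forall fun ε => (hFcont ε).aestronglyMeasurable)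
      ?_ hbint ?_
    · simpa [hR_def] using hdct
    · filter_upwards [Ioo_mem_nhdsGT_of_mem (Set.left_mem_Ico.mpr hε₀pos)] with ε hε
      exact hFbd ε hε
    · refine Eventually.of_forall fun p => ?_
      have hs : Tendsto (fun ε : ℝ => Real.sqrt ε) (nhdsWithin 0 (Set.Ioi 0)) (nhds 0) := by
        have := (Real.continuous_sqrt.tendsto 0)
        simpa [Real.sqrt_zero] using this.mono_left nhdsWithin_le_nhds
      have h1 : Tendsto (fun ε : ℝ => p.2 + Real.sqrt ε • (p.1 - y))
          (nhdsWithin 0 (Set.Ioi 0)) (nhds p.2) := by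
        have := tendsto_const_nhds (x := p.2) (f := nhdsWithin (0:ℝ) (Set.Ioi 0))
          |>.add (hs.smul_const (p.1 - y))
        simpa using this
      have h2 : Tendsto (fun ε : ℝ => g (p.2 + Real.sqrt ε • (p.1 - y)))
          (nhdsWithin 0 (Set.Ioi 0)) (nhds (g p.2)) := (hgc.tendsto p.2).comp h1
      have h3 := ((tendsto_const_nhds (x := g p.2)
        (f := nhdsWithin (0:ℝ) (Set.Ioi 0))).sub h2).abs
      simpa using h3
  have key : ∀ ε ∈ Set.Ioo (0:ℝ) ε₀,
      ‖(∫ ζ, K (Real.sqrt ε • ζ) * g ζ * φ (y - (Real.sqrt ε)⁻¹ • ζ)) - K 0 * ∫ ζ, g ζ‖ ≤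
        (L * M * C1) * Real.sqrt ε + |K 0| * (M * R ε) := by
    intro ε hε
    have hε0 : 0 < ε := hε.1
    set δ : ℝ := Real.sqrt ε with hδ_def
    have hδpos : 0 < δ := Real.sqrt_pos.mpr hε0
    have hKc : Continuous K := hKlip.continuous
    have hcont1 : ∀ c : Fin d → ℝ, Continuous fun ζ : Fin d → ℝ => g ζ * φ (c - δ⁻¹ • ζ) :=
      fun c => hgc.mul (hφcont.comp (by fun_prop))
    have hJc : ∀ c : Fin d → ℝ, Integrable (fun ζ => g ζ * φ (c - δ⁻¹ • ζ)) := by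
      intro c
      refine (hgi.const_mul M).mono' (hcont1 c).aestronglyMeasurable ?_
      filter_upwards with ζ
      rw [Real.norm_of_nonneg (mul_nonneg (hgnn ζ) (hφnn _))]
      calc g ζ * φ (c - δ⁻¹ • ζ) ≤ g ζ * M :=
            mul_le_mul_of_nonneg_left (hMb _) (hgnn ζ)
        _ = M * g ζ := mul_comm _ _
    have harg : ∀ w ξ : Fin d → ℝ, w - δ⁻¹ • (ξ + δ • (w - y)) = y - δ⁻¹ • ξ := by
      intro w ξ
      rw [smul_add, smul_smul, inv_mul_cancel₀ hδpos.ne', one_smul]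
      abel
    have hshiftInt : ∀ w : Fin d → ℝ,
        Integrable (fun ξ => g (ξ + δ • (w - y)) * φ (y - δ⁻¹ • ξ)) := by
      intro w
      have h1 := (hJc w).comp_add_right (δ • (w - y))
      refine h1.congr (Eventually.of_forall fun ξ => ?_)
      simp only
      rw [harg w ξ]
    have hAw : ∀ w : Fin d → ℝ, (∫ ζ, g ζ * φ (w - δ⁻¹ • ζ)) =
        ∫ ξ, g (ξ + δ • (w - y)) * φ (y - δ⁻¹ • ξ) := by
      intro w
      rw [← integral_add_right_eq_self (fun ζ => g ζ * φ (w - δ⁻¹ • ζ)) (δ • (w - y))]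
      refine integral_congr_ae (Eventually.of_forall fun ξ => ?_)
      simp only
      rw [harg w ξ]
    have hF1cont : Continuous fun p : (Fin d → ℝ) × (Fin d → ℝ) =>
        g p.2 * φ (p.1 - δ⁻¹ • p.2) :=
      (hgc.comp continuous_snd).mul
        (hφcont.comp (by fun_prop))
    have hF1int : Integrable (fun p : (Fin d → ℝ) × (Fin d → ℝ) =>
        g p.2 * φ (p.1 - δ⁻¹ • p.2)) ((volume.restrict cell).prod volume) := by
      have hb := (integrable_const (1:ℝ) (μ := volume.restrict cell)).mul_prod
        (hgi.const_mul M)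
      simp only [one_mul] at hb
      refine hb.mono' hF1cont.aestronglyMeasurable ?_
      filter_upwards with p
      rw [Real.norm_of_nonneg (mul_nonneg (hgnn _) (hφnn _))]
      calc g p.2 * φ (p.1 - δ⁻¹ • p.2) ≤ g p.2 * M :=
            mul_le_mul_of_nonneg_left (hMb _) (hgnn _)
        _ = M * g p.2 := mul_comm _ _
    have hAint : Integrable (fun w => ∫ ζ, g ζ * φ (w - δ⁻¹ • ζ)) (volume.restrict cell) :=
      hF1int.integral_prod_left
    have hFub : (∫ w in cell, (∫ ζ, g ζ * φ (w - δ⁻¹ • ζ)) ∂volume) = ∫ ζ, g ζ := by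
      have hswap := integral_integral_swap (μ := volume.restrict cell) (ν := volume)
        (f := fun w ζ => g ζ * φ (w - δ⁻¹ • ζ)) hF1int
      rw [hswap]
      have hinner : ∀ ζ : Fin d → ℝ, (∫ w in cell, g ζ * φ (w - δ⁻¹ • ζ)) = g ζ := by
        intro ζ
        rw [integral_const_mul, hshift (δ⁻¹ • ζ), mul_one]
      simp only [hinner]
    have hvolR : (∫ w in cell, (∫ ζ, g ζ * φ (y - δ⁻¹ • ζ)) ∂volume) =
        ∫ ζ, g ζ * φ (y - δ⁻¹ • ζ) := by
      rw [setIntegral_const]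
      simp [Measure.real, hvol]
    have hdiff : ∀ w : Fin d → ℝ,
        (∫ ζ, g ζ * φ (y - δ⁻¹ • ζ)) - (∫ ζ, g ζ * φ (w - δ⁻¹ • ζ)) =
          ∫ ξ, (g ξ - g (ξ + δ • (w - y))) * φ (y - δ⁻¹ • ξ) := by
      intro w
      rw [hAw w, ← integral_sub (hJc y) (hshiftInt w)]
      refine integral_congr_ae (Eventually.of_forall fun ξ => ?_)
      simp only [Pi.sub_apply]
      ring
    have habs : ∀ w : Fin d → ℝ,
        |(∫ ζ, g ζ * φ (y - δ⁻¹ • ζ)) - (∫ ζ, g ζ * φ (w - δ⁻¹ • ζ))| ≤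
          M * ∫ ξ, |g ξ - g (ξ + δ • (w - y))| := by
      intro w
      rw [hdiff w]
      have h1 : |∫ ξ, (g ξ - g (ξ + δ • (w - y))) * φ (y - δ⁻¹ • ξ)| ≤
          ∫ ξ, |(g ξ - g (ξ + δ • (w - y))) * φ (y - δ⁻¹ • ξ)| := by
        simpa only [Real.norm_eq_abs] using norm_integral_le_integral_norm
          (fun ξ => (g ξ - g (ξ + δ • (w - y))) * φ (y - δ⁻¹ • ξ))
      refine h1.trans ?_
      have hint1 : Integrable (fun ξ => (g ξ - g (ξ + δ • (w - y))) * φ (y - δ⁻¹ • ξ)) :=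
        ((hJc y).sub (hshiftInt w)).congr (Eventually.of_forall fun ξ => by simp only [Pi.sub_apply]; ring)
      have h2 : (∫ ξ, |(g ξ - g (ξ + δ • (w - y))) * φ (y - δ⁻¹ • ξ)|) ≤
          ∫ ξ, M * |g ξ - g (ξ + δ • (w - y))| := by
        refine integral_mono hint1.abs
          (((hgi.sub (hgi.comp_add_right _)).abs).const_mul M) ?_
        intro ξ
        dsimp only
        rw [abs_mul, abs_of_nonneg (hφnn _)]
        calc |g ξ - g (ξ + δ • (w - y))| * φ (y - δ⁻¹ • ξ)
            ≤ |g ξ - g (ξ + δ • (w - y))| * M :=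
              mul_le_mul_of_nonneg_left (hMb _) (abs_nonneg _)
          _ = M * |g ξ - g (ξ + δ • (w - y))| := mul_comm _ _
      refine h2.trans (le_of_eq ?_)
      rw [integral_const_mul]
    have hGprod : Integrable (fun p : (Fin d → ℝ) × (Fin d → ℝ) =>
        |g p.2 - g (p.2 + δ • (p.1 - y))|) ((volume.restrict cell).prod volume) := by
      refine hbint.mono' ?_ ?_
      · rw [hδ_def]
        exact (hFcont ε).aestronglyMeasurable
      · rw [hδ_def]
        exact hFbd ε hε
    have hReq : R ε = ∫ w in cell, (∫ ξ, |g ξ - g (ξ + δ • (w - y))|) ∂volume := by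
      have h := integral_prod _ hGprod
      rw [hR_def]
      simp only
      rw [hδ_def] at h ⊢
      exact h
    have hGcell : Integrable (fun w => ∫ ξ, |g ξ - g (ξ + δ • (w - y))|)
        (volume.restrict cell) := hGprod.integral_prod_left
    have hsplit : (∫ ζ, g ζ * φ (y - δ⁻¹ • ζ)) - (∫ ζ, g ζ) =
        ∫ w in cell, ((∫ ζ, g ζ * φ (y - δ⁻¹ • ζ)) - (∫ ζ, g ζ * φ (w - δ⁻¹ • ζ))) ∂volume := by
      rw [integral_sub (integrable_const _) hAint, hvolR, hFub]
    have claim2 : |(∫ ζ, g ζ * φ (y - δ⁻¹ • ζ)) - (∫ ζ, g ζ)| ≤ M * R ε := by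
      rw [hsplit]
      have h1 : |∫ w in cell, ((∫ ζ, g ζ * φ (y - δ⁻¹ • ζ)) -
          (∫ ζ, g ζ * φ (w - δ⁻¹ • ζ))) ∂volume| ≤
          ∫ w in cell, |(∫ ζ, g ζ * φ (y - δ⁻¹ • ζ)) -
            (∫ ζ, g ζ * φ (w - δ⁻¹ • ζ))| ∂volume := by
        simpa only [Real.norm_eq_abs] using norm_integral_le_integral_norm
          (μ := volume.restrict cell)
          (fun w => (∫ ζ, g ζ * φ (y - δ⁻¹ • ζ)) - (∫ ζ, g ζ * φ (w - δ⁻¹ • ζ)))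
      refine h1.trans ?_
      have h2 : (∫ w in cell, |(∫ ζ, g ζ * φ (y - δ⁻¹ • ζ)) -
          (∫ ζ, g ζ * φ (w - δ⁻¹ • ζ))| ∂volume) ≤
          ∫ w in cell, M * (∫ ξ, |g ξ - g (ξ + δ • (w - y))|) ∂volume :=
        integral_mono (((integrable_const _).sub hAint).abs) (hGcell.const_mul M)
          (fun w => habs w)
      refine h2.trans (le_of_eq ?_)
      rw [integral_const_mul, hReq]
    have hPint : Integrable (fun ζ => K (δ • ζ) * (g ζ * φ (y - δ⁻¹ • ζ))) := by
      have hBnn : (0:ℝ) ≤ B := (abs_nonneg (K 0)).trans (hKb 0)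
      refine ((hgi.const_mul M).const_mul B).mono'
        ((hKc.comp (continuous_id.const_smul δ)).mul (hcont1 y)).aestronglyMeasurable ?_
      filter_upwards with ζ
      rw [Real.norm_eq_abs, abs_mul]
      calc |K (δ • ζ)| * |g ζ * φ (y - δ⁻¹ • ζ)| ≤ B * (M * g ζ) := by
            refine mul_le_mul (hKb _) ?_ (abs_nonneg _) hBnn
            rw [abs_of_nonneg (mul_nonneg (hgnn _) (hφnn _))]
            calc g ζ * φ (y - δ⁻¹ • ζ) ≤ g ζ * M :=
                  mul_le_mul_of_nonneg_left (hMb _) (hgnn _)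
              _ = M * g ζ := mul_comm _ _
        _ = B * (M * g ζ) := rfl
    have hKdiff : ∀ ζ : Fin d → ℝ, |K (δ • ζ) - K 0| ≤ (L : ℝ) * (δ * ‖ζ‖) := by
      intro ζ
      have hl := hKlip.dist_le_mul (δ • ζ) 0
      rw [Real.dist_eq, dist_zero_right] at hl
      calc |K (δ • ζ) - K 0| ≤ (L : ℝ) * ‖δ • ζ‖ := hl
        _ = (L : ℝ) * (δ * ‖ζ‖) := by
            rw [norm_smul, Real.norm_eq_abs, abs_of_nonneg hδpos.le]
    have claim1 : |(∫ ζ, K (δ • ζ) * (g ζ * φ (y - δ⁻¹ • ζ))) -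
        K 0 * (∫ ζ, g ζ * φ (y - δ⁻¹ • ζ))| ≤ ((L : ℝ) * M * C1) * δ := by
      have hsub : (∫ ζ, K (δ • ζ) * (g ζ * φ (y - δ⁻¹ • ζ))) -
          K 0 * (∫ ζ, g ζ * φ (y - δ⁻¹ • ζ)) =
          ∫ ζ, (K (δ • ζ) - K 0) * (g ζ * φ (y - δ⁻¹ • ζ)) := by
        rw [← integral_const_mul, ← integral_sub hPint ((hJc y).const_mul (K 0))]
        refine integral_congr_ae (Eventually.of_forall fun ζ => ?_)
        simp only
        ring
      rw [hsub]
      have h1 : |∫ ζ, (K (δ • ζ) - K 0) * (g ζ * φ (y - δ⁻¹ • ζ))| ≤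
          ∫ ζ, |(K (δ • ζ) - K 0) * (g ζ * φ (y - δ⁻¹ • ζ))| := by
        simpa only [Real.norm_eq_abs] using norm_integral_le_integral_norm
          (fun ζ => (K (δ • ζ) - K 0) * (g ζ * φ (y - δ⁻¹ • ζ)))
      refine h1.trans ?_
      have hintsub : Integrable (fun ζ => (K (δ • ζ) - K 0) * (g ζ * φ (y - δ⁻¹ • ζ))) :=
        (hPint.sub ((hJc y).const_mul (K 0))).congr
          (Eventually.of_forall fun ζ => by simp only [Pi.sub_apply]; ring)
      have h2 : (∫ ζ, |(K (δ • ζ) - K 0) * (g ζ * φ (y - δ⁻¹ • ζ))|) ≤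
          ∫ ζ, (((L : ℝ) * M * δ) * (‖ζ‖ * g ζ)) := by
        refine integral_mono hintsub.abs (hgi1.const_mul _) ?_
        intro ζ
        dsimp only
        rw [abs_mul]
        have hb1 : |g ζ * φ (y - δ⁻¹ • ζ)| ≤ M * g ζ := by
          rw [abs_of_nonneg (mul_nonneg (hgnn _) (hφnn _))]
          calc g ζ * φ (y - δ⁻¹ • ζ) ≤ g ζ * M :=
                mul_le_mul_of_nonneg_left (hMb _) (hgnn _)
            _ = M * g ζ := mul_comm _ _
        calc |K (δ • ζ) - K 0| * |g ζ * φ (y - δ⁻¹ • ζ)| ≤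
              ((L : ℝ) * (δ * ‖ζ‖)) * (M * g ζ) := by
              refine mul_le_mul (hKdiff ζ) hb1 (abs_nonneg _) ?_
              positivity
          _ = ((L : ℝ) * M * δ) * (‖ζ‖ * g ζ) := by ring
      refine h2.trans (le_of_eq ?_)
      rw [integral_const_mul, hC1_def]
      ring
    have hPP : (∫ ζ, K (δ • ζ) * g ζ * φ (y - δ⁻¹ • ζ)) =
        ∫ ζ, K (δ • ζ) * (g ζ * φ (y - δ⁻¹ • ζ)) := by
      refine integral_congr_ae (Eventually.of_forall fun ζ => ?_)
      simp only
      ring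
    rw [Real.norm_eq_abs, hPP]
    have hdecomp : (∫ ζ, K (δ • ζ) * (g ζ * φ (y - δ⁻¹ • ζ))) - K 0 * (∫ ζ, g ζ) =
        ((∫ ζ, K (δ • ζ) * (g ζ * φ (y - δ⁻¹ • ζ))) -
          K 0 * (∫ ζ, g ζ * φ (y - δ⁻¹ • ζ))) +
          K 0 * ((∫ ζ, g ζ * φ (y - δ⁻¹ • ζ)) - (∫ ζ, g ζ)) := by ring
    rw [hdecomp]
    refine (abs_add_le _ _).trans ?_
    refine add_le_add claim1 ?_
    rw [abs_mul]
    exact mul_le_mul_of_nonneg_left claim2 (abs_nonneg _)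
  have htb : Tendsto (fun ε => (L * M * C1) * Real.sqrt ε + |K 0| * (M * R ε))
      (nhdsWithin 0 (Set.Ioi 0)) (nhds 0) := by
    have h1 : Tendsto (fun ε : ℝ => Real.sqrt ε) (nhdsWithin 0 (Set.Ioi 0)) (nhds 0) := by
      have := (Real.continuous_sqrt.tendsto 0)
      simpa [Real.sqrt_zero] using this.mono_left nhdsWithin_le_nhds
    have h2 := claim3.const_mul (M := ℝ) (|K 0| * M)
    have := ((h1.const_mul ((L:ℝ) * M * C1)).add h2)
    simpa [mul_assoc] using this
  rw [← tendsto_sub_nhds_zero_iff]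
  apply squeeze_zero_norm' _ htb
  filter_upwards [Ioo_mem_nhdsGT_of_mem (Set.left_mem_Ico.mpr hε₀pos)] with ε hε
  have := key ε hε
  simpa [hg_def, hφ_def] using this
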